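/- Fix 1 ≤ j ≤ n-2 and let A = [j-1] ∪ {j+1}. Every permutation σ ∈ S_n with σ(1)+...+σ(j) ≤ binom(j+1,2)+1 satisfies σ ≤ ←A·ω_A in the Bruhat order, where ←A·ω_A is the permutation whose one-line notation is j+1,j-1,j-2,...,1 followed by n,n-1,...,j+2,j. -/

import Mathlib

/-- Number of inversions (Coxeter length) of a permutation of `Fin n`. -/
def invCount {n : ℕ} (σ : Equiv.Perm (Fin n)) : ℕ :=
  ((Finset.univ : Finset (Fin n × Fin n)).filter
    (fun p => p.1 < p.2 ∧ σ p.2 < σ p.1)).card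

/-- Covering relation of the strong Bruhat order: multiply by a transposition
(on values) and increase the length by exactly one. -/
def BruhatCover {n : ℕ} (u v : Equiv.Perm (Fin n)) : Prop :=
  (∃ a b : Fin n, a ≠ b ∧ v = Equiv.swap a b * u) ∧ invCount v = invCount u + 1

/-- The strong Bruhat order on `Equiv.Perm (Fin n)`. -/
def BruhatLE {n : ℕ} : Equiv.Perm (Fin n) → Equiv.Perm (Fin n) → Prop :=
  Relation.ReflTransGen BruhatCover

/-- Sum of the first `j` one-line values of `σ` (values taken in `{1, …, n}`). -/
def firstSum {n : ℕ} (σ : Equiv.Perm (Fin n)) (j : ℕ) : ℕ :=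
  ∑ i ∈ Finset.univ.filter (fun i : Fin n => (i : ℕ) < j), ((σ i : ℕ) + 1)

/-!
Let `S` be the set of permutations whose first `j` values sum to at most `binom(j+1,2) + 1`.
Every `σ ∈ S` other than `←A·ω_A` has a Bruhat cover inside `S`; as lengths are bounded,
climbing such covers must end at `←A·ω_A`.
An ascent at adjacent positions that both lie in the first `j`, or both in the last `n - j`,
gives a cover by a position swap that leaves `firstSum` unchanged. Without such ascents `σ` is
decreasing on both blocks, so its `k`-th value is at least `j - k` and the slack of one forces
the first block to be `j, j-1, …, 1` or `j+1, j-1, …, 1`. In the first case exchanging the values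
`j` and `j+1` is a cover into `S`; in the second `σ` agrees with `←A·ω_A` on the first block and
both decrease on the second, so they are equal.
-/

open Equiv Finset

theorem Equiv.Perm.eq_of_eqOn_of_strictAntiOn_compl {α : Type*} [LinearOrder α] [Finite α]
    {σ τ : Perm α} {s : Set α} (h : Set.EqOn σ τ s) (hσ : StrictAntiOn σ sᶜ)
    (hτ : StrictAntiOn τ sᶜ) : σ = τ := by
  have himage : σ '' sᶜ = τ '' sᶜ := by
    rw [Set.image_compl_eq σ.bijective, Set.image_compl_eq τ.bijective, h.image_eq]
  have hcompl : (σ ∘ Subtype.val : ↥sᶜ → α) = τ ∘ Subtype.val := by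
    rwa [← hσ.strictAnti.range_inj hτ.strictAnti, Set.range_comp, Set.range_comp,
      Subtype.range_coe]
  ext x
  by_cases hx : x ∈ s
  · rw [h hx]
  · rw [show σ x = τ x from congrFun hcompl ⟨x, hx⟩]

theorem add_sub_le_of_forall_succ_lt {f : ℕ → ℕ} {a b : ℕ}
    (hf : ∀ k, a ≤ k → k < b → f (k + 1) < f k) {k l : ℕ} (hak : a ≤ k) (hkl : k ≤ l)
    (hlb : l ≤ b) : f l + (l - k) ≤ f k := by
  induction l, hkl using Nat.le_induction with
  | base => simp
  | succ l hkl ih =>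
    have := hf l (by omega) (by omega)
    have := ih (by omega)
    omega

theorem two_mul_sum_range_sub (m : ℕ) : 2 * ∑ k ∈ range m, (m - k) = m * (m + 1) := by
  induction m with
  | zero => simp
  | succ m ih =>
    simp only [sum_range_succ', Nat.add_sub_add_right, Nat.sub_zero, mul_add, ih]
    ring

theorem add_add_one_eq_of_sum_range_le {f : ℕ → ℕ} {m : ℕ} (hm : 0 < m)
    (hf : ∀ k, k + 1 < m → f (k + 1) < f k)
    (hsum : ∑ k ∈ range m, (f k + 1) ≤ m * (m + 1) / 2 + 1) :
    (∀ k, 0 < k → k < m → f k + k + 1 = m) ∧ (f 0 + 1 = m ∨ f 0 = m) := by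
  have hchain {k l} (hkl : k ≤ l) (hlm : l < m) : f l + (l - k) ≤ f k :=
    add_sub_le_of_forall_succ_lt (b := m - 1) (fun k _ hk => hf k (by omega))
      (Nat.zero_le k) hkl (by omega)
  have hlow : ∀ k ∈ range m, m - k ≤ f k + 1 := fun k hk => by
    have := hchain (k := k) (l := m - 1) (by rw [mem_range] at hk; omega) (by omega)
    omega
  have hexcess : ∑ k ∈ range m, (f k + 1 - (m - k)) ≤ 1 := by
    rw [sum_tsub_distrib _ hlow]
    have := two_mul_sum_range_sub m
    omega
  have hexcess0 : f 0 + 1 - m ≤ 1 :=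
    (single_le_sum (f := fun k => f k + 1 - (m - k)) (fun _ _ => Nat.zero_le _)
      (mem_range.2 hm)).trans hexcess
  refine ⟨fun k hk0 hkm => ?_, by have := hlow 0 (mem_range.2 hm); omega⟩
  -- An excess at `k > 0` propagates to `0` along the strict decrease, giving two excesses.
  have hpair := (add_le_sum (f := fun k => f k + 1 - (m - k)) (fun _ _ => Nat.zero_le _)
    (mem_range.2 hm) (mem_range.2 hkm) hk0.ne).trans hexcess
  have := hchain hk0.le hkm
  have := hlow k (mem_range.2 hkm)
  omega

section Inversions

variable {n : ℕ}

theorem invCount_inv (σ : Perm (Fin n)) : invCount σ⁻¹ = invCount σ := by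
  refine card_nbij' (fun r => (σ⁻¹ r.2, σ⁻¹ r.1)) (fun r => (σ r.2, σ r.1)) ?_ ?_ ?_ ?_ <;>
    intro r <;> simp +contextual

theorem invCount_mul_swap_of_lt {σ : Perm (Fin n)} {p q : Fin n} (hpq : (p : ℕ) + 1 = q)
    (h : σ p < σ q) : invCount (σ * swap p q) = invCount σ + 1 := by
  have hlt : p < q := Fin.lt_def.2 (by omega)
  -- Since `p` and `q` are adjacent, `swap p q` preserves the order of every other pair.
  have hswap : ∀ x y, (x, y) ≠ (p, q) → (x, y) ≠ (q, p) → (swap p q x < swap p q y ↔ x < y) := by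
    intro x y hxy hyx
    simp only [swap_apply_def, Fin.lt_def, ne_eq, Prod.mk.injEq, Fin.ext_iff] at *
    split_ifs <;> omega
  have hinv : univ.filter (fun r => r.1 < r.2 ∧ (σ * swap p q) r.2 < (σ * swap p q) r.1) =
      insert (p, q) ((univ.filter (fun r => r.1 < r.2 ∧ σ r.2 < σ r.1)).map
        ((swap p q).prodCongr (swap p q)).toEmbedding) := by
    ext ⟨x, y⟩
    rw [mem_insert, mem_map_equiv, mem_filter, mem_filter]
    simp only [mem_univ, true_and, prodCongr_symm, prodCongr_apply, Prod.map, Perm.mul_apply,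
      symm_swap]
    by_cases hxy : (x, y) = (p, q)
    · simp_all
    by_cases hyx : (x, y) = (q, p)
    · simp_all [h.not_gt, hlt.not_gt]
    rw [hswap x y hxy hyx]
    simp [hxy]
  rw [invCount, hinv, card_insert_of_notMem, card_map, invCount]
  simp [hlt.not_gt]

theorem invCount_swap_mul_of_lt {σ : Perm (Fin n)} {a b : Fin n} (hab : (a : ℕ) + 1 = b)
    (h : σ⁻¹ a < σ⁻¹ b) : invCount (swap a b * σ) = invCount σ + 1 := by
  rw [← invCount_inv, mul_inv_rev, swap_inv, invCount_mul_swap_of_lt hab h, invCount_inv]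

theorem bruhatCover_mul_swap {σ : Perm (Fin n)} {p q : Fin n} (hpq : (p : ℕ) + 1 = q)
    (h : σ p < σ q) : BruhatCover σ (σ * swap p q) :=
  ⟨⟨σ p, σ q, h.ne, σ.mul_swap_eq_swap_mul p q⟩, invCount_mul_swap_of_lt hpq h⟩

theorem bruhatCover_swap_mul {σ : Perm (Fin n)} {a b : Fin n} (hab : (a : ℕ) + 1 = b)
    (h : σ⁻¹ a < σ⁻¹ b) : BruhatCover σ (swap a b * σ) :=
  ⟨⟨a, b, fun h => by simp [h] at hab, rfl⟩, invCount_swap_mul_of_lt hab h⟩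

theorem invCount_le (σ : Perm (Fin n)) : invCount σ ≤ n * n :=
  (card_filter_le _ _).trans (by simp)

theorem bruhatLE_of_forall_exists_bruhatCover {S : Set (Perm (Fin n))} {τ : Perm (Fin n)}
    (hS : ∀ σ ∈ S, σ ≠ τ → ∃ v ∈ S, BruhatCover σ v) {σ : Perm (Fin n)} (hσ : σ ∈ S) :
    BruhatLE σ τ := by
  induction h : n * n - invCount σ using Nat.strong_induction_on generalizing σ with
  | _ k ih =>
    obtain rfl | hne := eq_or_ne σ τ
    · exact .refl
    obtain ⟨v, hv, hcov⟩ := hS σ hσ hne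
    have := hcov.2
    have := invCount_le v
    exact .head hcov (ih _ (by omega) hv rfl)

end Inversions

section FirstSum

variable {n j : ℕ}

theorem firstSum_mul_swap (σ : Perm (Fin n)) {p q : Fin n} (hpq : (p : ℕ) < j ↔ (q : ℕ) < j) :
    firstSum (σ * swap p q) j = firstSum σ j := by
  refine sum_nbij' (swap p q) (swap p q) ?_ ?_ ?_ ?_ ?_ <;> intro i
  iterate 2
    simp only [swap_apply_def]
    split_ifs <;> simp_all
  all_goals simp

theorem firstSum_swap_mul_add (σ : Perm (Fin n)) {a b : Fin n} (ha : (σ⁻¹ a : ℕ) < j)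
    (hb : j ≤ (σ⁻¹ b : ℕ)) : firstSum (swap a b * σ) j + a = firstSum σ j + b := by
  have hmem : σ⁻¹ a ∈ univ.filter (fun i : Fin n => (i : ℕ) < j) := by simpa using ha
  rw [firstSum, firstSum, ← add_sum_erase _ _ hmem, ← add_sum_erase _ _ hmem]
  have hrest : ∀ i ∈ (univ.filter (fun i : Fin n => (i : ℕ) < j)).erase (σ⁻¹ a),
      ((swap a b * σ) i : ℕ) + 1 = (σ i : ℕ) + 1 := by
    intro i hi
    simp only [mem_erase, mem_filter, mem_univ, true_and] at hi
    rw [Perm.mul_apply, swap_apply_of_ne_of_ne]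
    · exact fun h => hi.1 (by simp [← h])
    · rintro rfl
      simp only [Perm.coe_inv, symm_apply_apply] at hb
      omega
  rw [sum_congr rfl hrest]
  simp only [Perm.coe_inv, Perm.coe_mul, Function.comp_apply, apply_symm_apply, swap_apply_left]
  omega

end FirstSum

section OneLine

variable {n j : ℕ}

def oneLine (σ : Perm (Fin n)) (i : ℕ) : ℕ := if h : i < n then σ ⟨i, h⟩ else 0

theorem oneLine_of_lt (σ : Perm (Fin n)) {i : ℕ} (hi : i < n) : oneLine σ i = σ ⟨i, hi⟩ :=
  dif_pos hi

theorem oneLine_val (σ : Perm (Fin n)) (i : Fin n) : oneLine σ i = σ i :=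
  oneLine_of_lt σ i.isLt

theorem firstSum_eq_sum_range (σ : Perm (Fin n)) (hjn : j ≤ n) :
    firstSum σ j = ∑ k ∈ range j, (oneLine σ k + 1) := by
  have hrange : range j = (range n).filter (· < j) := by
    ext
    simp only [mem_range, mem_filter, iff_and_self]
    omega
  rw [firstSum, hrange, sum_filter, sum_filter,
    ← Fin.sum_univ_eq_sum_range (fun k => if k < j then oneLine σ k + 1 else 0)]
  simp only [oneLine_val]

end OneLine

section Step

variable {n j : ℕ}

theorem strictAntiOn_of_oneLine_succ_lt {σ : Perm (Fin n)}
    (hdesc : ∀ k, j ≤ k → k + 1 < n → oneLine σ (k + 1) < oneLine σ k) :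
    StrictAntiOn σ {i : Fin n | (i : ℕ) < j}ᶜ := by
  intro i hi i' hi' hii'
  simp only [Set.mem_compl_iff, Set.mem_ofPred_eq, not_lt] at hi hi'
  have := add_sub_le_of_forall_succ_lt (f := oneLine σ) (b := n - 1)
    (fun k hk hkb => hdesc k hk (by omega)) hi hii'.le (by omega)
  rw [oneLine_val, oneLine_val] at this
  rw [Fin.lt_def] at hii' ⊢
  omega

theorem exists_bruhatCover_of_oneLine_add_eq (hj : 1 ≤ j) (hjn : j < n) {σ : Perm (Fin n)}
    (hhead : ∀ k < j, oneLine σ k + k + 1 = j) :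
    ∃ v, firstSum v j = j * (j + 1) / 2 + 1 ∧ BruhatCover σ v := by
  set a : Fin n := ⟨j - 1, by omega⟩
  set b : Fin n := ⟨j, hjn⟩
  have ha : σ⁻¹ a = ⟨0, by omega⟩ := by
    rw [Perm.inv_eq_iff_eq, Fin.ext_iff, ← oneLine_val]
    have := hhead 0 hj
    simp only [a]
    omega
  have hb : j ≤ (σ⁻¹ b : ℕ) := by
    by_contra! hlt
    have := hhead _ hlt
    rw [oneLine_val, Perm.coe_inv, apply_symm_apply] at this
    simp only [b] at this
    omega
  have hσ : 2 * firstSum σ j = j * (j + 1) := by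
    rw [firstSum_eq_sum_range σ hjn.le, ← two_mul_sum_range_sub j]
    congr 1
    refine sum_congr rfl fun k hk => ?_
    have := hhead k (mem_range.1 hk)
    omega
  have hv := firstSum_swap_mul_add σ (a := a) (by rw [ha]; exact hj) hb
  have ha' : (a : ℕ) = j - 1 := rfl
  have hb' : (b : ℕ) = j := rfl
  refine ⟨swap a b * σ, by omega, bruhatCover_swap_mul (by omega) ?_⟩
  rw [ha, Fin.lt_def]
  exact Nat.lt_of_lt_of_le hj hb

theorem exists_bruhatCover_of_firstSum_le (hj : 1 ≤ j) (hjn : j < n) {τ σ : Perm (Fin n)}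
    (hτhead : ∀ k < j, oneLine τ k = if k = 0 then j else j - 1 - k)
    (hτtail : StrictAntiOn τ {i : Fin n | (i : ℕ) < j}ᶜ)
    (hσ : firstSum σ j ≤ j * (j + 1) / 2 + 1) (hne : σ ≠ τ) :
    ∃ v, firstSum v j ≤ j * (j + 1) / 2 + 1 ∧ BruhatCover σ v := by
  by_cases hasc : ∃ p q : Fin n, (p : ℕ) + 1 = q ∧ (q : ℕ) ≠ j ∧ σ p < σ q
  · obtain ⟨p, q, hpq, hqj, h⟩ := hasc
    refine ⟨σ * swap p q, ?_, bruhatCover_mul_swap hpq h⟩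
    rwa [firstSum_mul_swap σ (by omega)]
  push Not at hasc
  have hdesc : ∀ k, k + 1 < n → k + 1 ≠ j → oneLine σ (k + 1) < oneLine σ k := by
    intro k hk hkj
    have hle := hasc ⟨k, by omega⟩ ⟨k + 1, hk⟩ rfl hkj
    have hne' : σ ⟨k + 1, hk⟩ ≠ σ ⟨k, by omega⟩ := σ.injective.ne (by simp)
    rw [Fin.le_def, ← oneLine_of_lt, ← oneLine_of_lt] at hle
    rw [Ne, Fin.ext_iff, ← oneLine_of_lt, ← oneLine_of_lt] at hne'
    omega
  obtain ⟨hhead, h0 | h0⟩ := add_add_one_eq_of_sum_range_le hj (fun k hk => hdesc k (by omega) (by omega))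
    (firstSum_eq_sum_range σ hjn.le ▸ hσ)
  · obtain ⟨v, hv, hcov⟩ := exists_bruhatCover_of_oneLine_add_eq hj hjn (σ := σ) fun k hk => by
      rcases Nat.eq_zero_or_pos k with rfl | hk0
      · omega
      · exact hhead k hk0 hk
    exact ⟨v, hv.le, hcov⟩
  · refine absurd (Perm.eq_of_eqOn_of_strictAntiOn_compl (fun i hi => ?_)
      (strictAntiOn_of_oneLine_succ_lt fun k hk hkn => hdesc k hkn (by omega)) hτtail) hne
    have hi : (i : ℕ) < j := hi
    rw [Fin.ext_iff, ← oneLine_val, ← oneLine_val, hτhead i hi]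
    split_ifs with hi0
    · rwa [hi0]
    · have := hhead i (Nat.pos_of_ne_zero hi0) hi
      omega

end Step

theorem max_perm_below_hyperplane (n j : ℕ) (hj : 1 ≤ j) (hjn : j + 2 ≤ n)
    (τmax : Equiv.Perm (Fin n))
    (hτmax : ∀ i : Fin n, (τmax i : ℕ) =
      if (i : ℕ) = 0 then j
      else if (i : ℕ) < j then j - 1 - (i : ℕ)
      else if (i : ℕ) < n - 1 then n + j - 1 - (i : ℕ)
      else j - 1)
    (σ : Equiv.Perm (Fin n)) (hσ : firstSum σ j ≤ j * (j + 1) / 2 + 1) :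
    BruhatLE σ τmax := by
  have hhead : ∀ k < j, oneLine τmax k = if k = 0 then j else j - 1 - k := by
    intro k hk
    rw [oneLine_of_lt τmax (by omega), hτmax, Fin.val_mk]
    split_ifs <;> omega
  have htail : StrictAntiOn τmax {i : Fin n | (i : ℕ) < j}ᶜ := by
    intro i hi i' hi' hii'
    simp only [Set.mem_compl_iff, Set.mem_ofPred_eq, not_lt] at hi hi'
    rw [Fin.lt_def] at hii' ⊢
    rw [hτmax, hτmax]
    split_ifs <;> omega
  exact bruhatLE_of_forall_exists_bruhatCover (S := {σ | firstSum σ j ≤ j * (j + 1) / 2 + 1})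
    (fun σ hσ hne => exists_bruhatCover_of_firstSum_le hj (by omega) hhead htail hσ hne) hσ
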